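/- There exists an absolute constant c > 0 such that for every 0 < ε ≤ 1/2, every 1 ≤ m ≤ n with 2m ≤ n, and every 0 < r ≤ 1, there exists a set Λ̄ ⊂ rB₂ⁿ with (U_m − U_m) ∩ rB₂ⁿ ⊂ 2 conv Λ̄ and |Λ̄| ≤ exp(c m log(c n/(m ε))). -/

import Mathlib

/-!
A volumetric argument gives an `r/2`-net of `r B₂ᵈ` with at most `5ᵈ` points, and a bounded set
`K ⊆ N + K/2` satisfies `K ⊆ 2 conv N`: iterating gives `K ⊆ (2 - 2¹⁻ᵏ) conv N + 2⁻ᵏ K`, and the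
remainder shrinks to `0`. A vector of `U_m − U_m` has at most `2m` nonzero coordinates, so it lies
in one of the `C(n, 2m)` coordinate subspaces `F` of dimension `2m`. The union `Λ̄` of the nets
of the balls `r B₂ⁿ ∩ F` has `|Λ̄| ≤ C(n, 2m) 5²ᵐ ≤ (5e n / 2m)²ᵐ`.
-/

open Metric Set MeasureTheory Module Real
open scoped Pointwise NNReal ENNReal Nat

/-- `U_m`: unit vectors of `ℝⁿ` with at most `m` nonzero coordinates. -/
def sparseSphere (n m : ℕ) : Set (EuclideanSpace ℝ (Fin n)) :=
  {x | ‖x‖ = 1 ∧ {i | x i ≠ 0}.ncard ≤ m}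

section NormedSpace

variable {E : Type*} [NormedAddCommGroup E] [NormedSpace ℝ E]

theorem subset_two_smul_convexHull_of_subset_add {K N : Set E} (hK : Bornology.IsBounded K)
    (hN : N.Finite) (hKN : K ⊆ N + (2⁻¹ : ℝ) • K) : K ⊆ (2 : ℝ) • convexHull ℝ N := by
  rcases K.eq_empty_or_nonempty with rfl | ⟨x₀, hx₀⟩
  · exact empty_subset _
  set C := convexHull ℝ N
  have hCne : C.Nonempty := by
    obtain ⟨p, hp, -⟩ := hKN hx₀
    exact ⟨p, subset_convexHull ℝ N hp⟩
  have hiter : ∀ k : ℕ, K ⊆ (2 - 2 * 2⁻¹ ^ k : ℝ) • C + ((2⁻¹ : ℝ) ^ k) • K := by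
    intro k
    induction k with
    | zero => simp [zero_smul_set hCne]
    | succ k ih =>
      calc K ⊆ (2 - 2 * 2⁻¹ ^ k : ℝ) • C + ((2⁻¹ : ℝ) ^ k) • K := ih
        _ ⊆ (2 - 2 * 2⁻¹ ^ k : ℝ) • C + ((2⁻¹ : ℝ) ^ k) • (N + (2⁻¹ : ℝ) • K) :=
          add_subset_add_left (smul_set_mono hKN)
        _ ⊆ (2 - 2 * 2⁻¹ ^ k : ℝ) • C + ((2⁻¹ : ℝ) ^ k) • C + ((2⁻¹ : ℝ) ^ (k + 1)) • K := by
          rw [smul_add, smul_smul, ← pow_succ, ← add_assoc]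
          exact add_subset_add_right (add_subset_add_left
            (smul_set_mono (subset_convexHull ℝ N)))
        _ = (2 - 2 * 2⁻¹ ^ (k + 1) : ℝ) • C + ((2⁻¹ : ℝ) ^ (k + 1)) • K := by
          have : (2⁻¹ : ℝ) ^ k ≤ 1 := pow_le_one₀ (by norm_num) (by norm_num)
          rw [← (convex_convexHull ℝ N).add_smul (by linarith) (by positivity)]
          congr 2; ring
  have hC2 : IsCompact ((2 : ℝ) • C) := (hN.isCompact_convexHull (𝕜 := ℝ)).smul (2 : ℝ)
  obtain ⟨R, hR, hRD⟩ := (hK.sub hC2.isBounded).exists_pos_norm_le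
  intro x hx
  rw [← hC2.isClosed.closure_eq, Metric.mem_closure_iff]
  intro ε hε
  obtain ⟨k, hk⟩ := exists_pow_lt_of_lt_one (div_pos hε hR) (by norm_num : (2⁻¹ : ℝ) < 1)
  obtain ⟨_, ⟨z, hz, rfl⟩, _, ⟨y, hy, rfl⟩, rfl⟩ := hiter k hx
  refine ⟨(2 : ℝ) • z, smul_mem_smul_set hz, ?_⟩
  have hyz : ‖y - (2 : ℝ) • z‖ ≤ R := hRD _ (sub_mem_sub hy (smul_mem_smul_set hz))
  calc dist ((2 - 2 * 2⁻¹ ^ k : ℝ) • z + ((2⁻¹ : ℝ) ^ k) • y) ((2 : ℝ) • z)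
      = (2⁻¹ : ℝ) ^ k * ‖y - (2 : ℝ) • z‖ := by
        rw [dist_eq_norm, ← norm_smul_of_nonneg (by positivity)]
        congr 1
        module
    _ ≤ (2⁻¹ : ℝ) ^ k * R := by gcongr
    _ < ε := by rwa [lt_div_iff₀ hR] at hk

section FiniteDimensional

variable [FiniteDimensional ℝ E]

theorem card_mul_pow_le_of_isSeparated {C : Finset E} {x : E} {r : ℝ} {δ : ℝ≥0} (hr : 0 ≤ r)
    (hδ : 0 < δ) (hC : ↑C ⊆ closedBall x r) (hsep : IsSeparated δ (C : Set E)) :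
    (C.card : ℝ) * δ ^ finrank ℝ E ≤ (2 * r + δ) ^ finrank ℝ E := by
  borelize E
  set μ : Measure E := Measure.addHaar
  have hδ' : (0 : ℝ) < δ := hδ
  have hdisj : (C : Set E).PairwiseDisjoint fun p => ball p (δ / 2) := by
    intro p hp q hq hpq
    have hpq' : (δ : ℝ≥0∞) < edist p q := hsep hp hq hpq
    rw [edist_nndist, ENNReal.coe_lt_coe, ← NNReal.coe_lt_coe, coe_nndist] at hpq'
    exact ball_disjoint_ball (by linarith)
  have hsub : (⋃ p ∈ C, ball p (δ / 2)) ⊆ ball x (r + δ / 2) :=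
    iUnion₂_subset fun p hp => ball_subset_ball' (by linarith [mem_closedBall.mp (hC hp)])
  have hvol : ∑ p ∈ C, μ (ball p (δ / 2)) ≤ μ (ball x (r + δ / 2)) := by
    rw [← measure_biUnion_finset hdisj fun _ _ => measurableSet_ball]
    exact measure_mono hsub
  simp only [Measure.addHaar_ball_of_pos μ _ (half_pos hδ'),
    Measure.addHaar_ball_of_pos μ _ (by positivity : 0 < r + δ / 2), Finset.sum_const,
    nsmul_eq_mul, ← mul_assoc] at hvol
  replace hvol := (ENNReal.mul_le_mul_iff_left (measure_ball_pos μ 0 one_pos).ne'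
    measure_ball_lt_top.ne).mp hvol
  rw [← ENNReal.ofReal_natCast, ← ENNReal.ofReal_mul (by positivity),
    ENNReal.ofReal_le_ofReal_iff (by positivity)] at hvol
  calc (C.card : ℝ) * δ ^ finrank ℝ E = 2 ^ finrank ℝ E * (C.card * (δ / 2) ^ finrank ℝ E) := by
        rw [div_pow]; field_simp
    _ ≤ 2 ^ finrank ℝ E * (r + δ / 2) ^ finrank ℝ E := by gcongr
    _ = (2 * r + δ) ^ finrank ℝ E := by rw [← mul_pow]; ring_nf

theorem packingNumber_half_closedBall_le (x : E) {r : ℝ≥0} (hr : 0 < r) :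
    packingNumber (r / 2) (closedBall x r) ≤ 5 ^ finrank ℝ E := by
  refine iSup₂_le fun C hCx => iSup_le fun hsep => ?_
  by_contra! hlt
  obtain ⟨t, htC, htcard⟩ := exists_subset_encard_eq (Order.add_one_le_of_lt hlt)
  have htfin : t.Finite :=
    finite_of_encard_eq_coe (k := 5 ^ finrank ℝ E + 1) (by simpa using htcard)
  have hcard : htfin.toFinset.card = 5 ^ finrank ℝ E + 1 := by
    rw [← ncard_eq_toFinset_card t htfin, ncard_def, htcard]; simp
  have hvol := card_mul_pow_le_of_isSeparated (C := htfin.toFinset) r.coe_nonneg (half_pos hr)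
    (by simpa using htC.trans hCx) (by simpa using hsep.subset htC)
  rw [hcard] at hvol
  push_cast at hvol
  have h5 : (2 * (r : ℝ) + r / 2) ^ finrank ℝ E =
      5 ^ finrank ℝ E * (r / 2 : ℝ) ^ finrank ℝ E := by
    rw [← mul_pow]; ring_nf
  have hpos : (0 : ℝ) < (r / 2 : ℝ) ^ finrank ℝ E := by positivity
  rw [h5, add_mul, one_mul] at hvol
  linarith

theorem exists_finite_net_closedBall (x : E) {r : ℝ} (hr : 0 < r) :
    ∃ N ⊆ closedBall x r, N.Finite ∧ N.ncard ≤ 5 ^ finrank ℝ E ∧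
      ∀ y ∈ closedBall x r, ∃ p ∈ N, dist y p ≤ r / 2 := by
  lift r to ℝ≥0 using hr.le
  have hpack := packingNumber_half_closedBall_le x (mod_cast hr : 0 < r)
  have hfin : packingNumber (r / 2) (closedBall x r) ≠ ⊤ := ne_top_of_le_ne_top (by simp) hpack
  have hcard := (encard_maximalSeparatedSet hfin).trans_le hpack
  have hcover := isCover_iff_subset_iUnion_closedBall.mp (isCover_maximalSeparatedSet hfin)
  obtain ⟨hNfin, hNcard⟩ := encard_le_coe_iff_finite_ncard_le.mp (by exact_mod_cast hcard)
  refine ⟨_, maximalSeparatedSet_subset, hNfin, hNcard, fun y hy => ?_⟩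
  obtain ⟨p, hp, hyp⟩ := mem_iUnion₂.mp (hcover hy)
  exact ⟨p, hp, by simpa using hyp⟩

theorem exists_finite_closedBall_subset_two_smul_convexHull {r : ℝ} (hr : 0 < r) :
    ∃ N ⊆ closedBall (0 : E) r, N.Finite ∧ N.ncard ≤ 5 ^ finrank ℝ E ∧
      closedBall (0 : E) r ⊆ (2 : ℝ) • convexHull ℝ N := by
  obtain ⟨N, hNr, hNfin, hNcard, hnet⟩ := exists_finite_net_closedBall (0 : E) hr
  refine ⟨N, hNr, hNfin, hNcard,
    subset_two_smul_convexHull_of_subset_add isBounded_closedBall hNfin ?_⟩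
  intro y hy
  obtain ⟨p, hp, hyp⟩ := hnet y hy
  refine ⟨p, hp, (2 : ℝ)⁻¹ • (2 : ℝ) • (y - p), smul_mem_smul_set ?_, by module⟩
  rw [mem_closedBall_zero_iff, norm_smul, ← dist_eq_norm]
  norm_num
  linarith

end FiniteDimensional

theorem Submodule.exists_finite_closedBall_inter_subset_two_smul_convexHull
    (F : Submodule ℝ E) [FiniteDimensional ℝ F] {r : ℝ} (hr : 0 < r) :
    ∃ N ⊆ closedBall (0 : E) r, N.Finite ∧ N.ncard ≤ 5 ^ finrank ℝ F ∧
      closedBall (0 : E) r ∩ F ⊆ (2 : ℝ) • convexHull ℝ N := by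
  obtain ⟨N, hNr, hNfin, hNcard, hcov⟩ :=
    exists_finite_closedBall_subset_two_smul_convexHull (E := F) hr
  refine ⟨F.subtype '' N, ?_, hNfin.image _, (ncard_image_le hNfin).trans hNcard, ?_⟩
  · rintro _ ⟨p, hp, rfl⟩
    simpa using hNr hp
  · rintro x ⟨hx, hxF⟩
    have hx' : (⟨x, hxF⟩ : F) ∈ closedBall 0 r := by simpa using hx
    have := mem_image_of_mem F.subtype (hcov hx')
    rwa [image_smul_set, LinearMap.image_convexHull] at this

end NormedSpace

theorem finrank_span_image_finset_le_card {R ι M : Type*} [Ring R] [StrongRankCondition R]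
    [AddCommGroup M] [Module R M] (f : ι → M) (S : Finset ι) :
    finrank R (Submodule.span R (f '' S)) ≤ S.card := by
  classical
  rw [← Finset.coe_image]
  exact (finrank_span_finset_le_card _).trans Finset.card_image_le

section EuclideanSpace

variable {ι : Type*} [Fintype ι]

theorem EuclideanSpace.mem_span_basisFun_image_iff {x : EuclideanSpace ℝ ι} {S : Set ι} :
    x ∈ Submodule.span ℝ ((EuclideanSpace.basisFun ι ℝ).toBasis '' S) ↔ {i | x i ≠ 0} ⊆ S := by
  have hsupp : (((EuclideanSpace.basisFun ι ℝ).toBasis.repr x).support : Set ι) =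
      {i | x i ≠ 0} := by
    ext i; simp
  rw [Basis.mem_span_image, hsupp]

theorem EuclideanSpace.ncard_support_sub_le (x y : EuclideanSpace ℝ ι) :
    {i | (x - y) i ≠ 0}.ncard ≤ {i | x i ≠ 0}.ncard + {i | y i ≠ 0}.ncard := by
  refine (ncard_le_ncard ?_ (toFinite _)).trans (ncard_union_le _ _)
  intro i hi
  by_contra h
  simp_all

end EuclideanSpace

theorem exists_card_eq_mem_span_of_mem_sparseSphere_sub {n m : ℕ} (hmn : 2 * m ≤ n)
    {x : EuclideanSpace ℝ (Fin n)} (hx : x ∈ sparseSphere n m - sparseSphere n m) :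
    ∃ S : Finset (Fin n), S.card = 2 * m ∧
      x ∈ Submodule.span ℝ ((EuclideanSpace.basisFun (Fin n) ℝ).toBasis '' S) := by
  obtain ⟨u, hu, v, hv, rfl⟩ := hx
  have hcard : {i | (u - v) i ≠ 0}.toFinset.card ≤ 2 * m := by
    rw [← ncard_eq_toFinset_card']
    linarith [EuclideanSpace.ncard_support_sub_le u v, hu.2, hv.2]
  obtain ⟨S, hsub, -, hS⟩ :=
    Finset.exists_subsuperset_card_eq (Finset.subset_univ _) hcard (by simpa using hmn)
  refine ⟨S, hS, EuclideanSpace.mem_span_basisFun_image_iff.mpr ?_⟩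
  intro i hi
  exact hsub (mem_toFinset.mpr hi)

theorem Nat.choose_le_exp_one_mul_div_pow (n k : ℕ) :
    (n.choose k : ℝ) ≤ (exp 1 * n / k) ^ k := by
  rcases k.eq_zero_or_pos with rfl | hk
  · simp
  have hk' : (0 : ℝ) < k := by exact_mod_cast hk
  have hfact : (k : ℝ) ^ k / k ! ≤ exp 1 ^ k := by
    rw [← exp_nat_mul, mul_one]; exact pow_div_factorial_le_exp _ hk'.le k
  calc (n.choose k : ℝ) ≤ (n : ℝ) ^ k / k ! := Nat.choose_le_pow_div k n
    _ = (n / k : ℝ) ^ k * ((k : ℝ) ^ k / k !) := by rw [div_pow]; field_simp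
    _ ≤ (n / k : ℝ) ^ k * exp 1 ^ k := by gcongr
    _ = (exp 1 * n / k) ^ k := by rw [← mul_pow]; ring

theorem choose_two_mul_mul_five_pow_le_exp {n m : ℕ} {ε : ℝ} (hε : 0 < ε) (hε2 : ε ≤ 1 / 2)
    (hm : 0 < m) (hmn : m ≤ n) :
    (n.choose (2 * m) * 5 ^ (2 * m) : ℝ) ≤ exp (4 * m * log (4 * n / (m * ε))) := by
  have hm' : (0 : ℝ) < m := by exact_mod_cast hm
  have hmn' : (m : ℝ) ≤ n := by exact_mod_cast hmn
  set X := 4 * n / (m * ε)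
  have hX : 8 * n / m ≤ X := by
    rw [div_le_div_iff₀ hm' (by positivity)]
    nlinarith [mul_le_mul_of_nonneg_left hε2 (by positivity : (0 : ℝ) ≤ n * m)]
  have hX1 : 1 ≤ X := by
    refine le_trans ?_ hX
    rw [le_div_iff₀ hm']
    linarith
  calc (n.choose (2 * m) * 5 ^ (2 * m) : ℝ)
      ≤ (exp 1 * n / (2 * m : ℕ)) ^ (2 * m) * 5 ^ (2 * m) := by
        gcongr; exact Nat.choose_le_exp_one_mul_div_pow n (2 * m)
    _ = (5 / 2 * exp 1 * (n / m)) ^ (2 * m) := by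
        rw [← mul_pow]; push_cast; congr 1; field_simp
    _ ≤ X ^ (2 * m) := by
        gcongr
        calc 5 / 2 * exp 1 * (n / m) ≤ 8 * (n / m) := by gcongr; linarith [exp_one_lt_d9]
          _ ≤ X := by rwa [← mul_div_assoc]
    _ ≤ X ^ (4 * m) := pow_le_pow_right₀ hX1 (by omega)
    _ = exp (4 * m * log X) := by
        rw [← exp_log (by positivity : 0 < X), ← exp_nat_mul, exp_log (by positivity)]
        push_cast; ring_nf

/-- Lemma `cover`, "furthermore" part: there is an absolute constant `c > 0`
such that for every `0 < ε ≤ 1/2`, every `1 ≤ m ≤ n` with `2m ≤ n` and every `0 < r ≤ 1`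
there exists `Λ̄ ⊆ rB₂ⁿ` with `(U_m − U_m) ∩ rB₂ⁿ ⊆ 2 conv Λ̄` and
`|Λ̄| ≤ exp(c m log(c n/(m ε)))`. -/
theorem stmt6 :
    ∃ c : ℝ, 0 < c ∧
      ∀ (n m : ℕ) (ε r : ℝ), 0 < ε → ε ≤ 1 / 2 → 1 ≤ m → m ≤ n → 2 * m ≤ n → 0 < r → r ≤ 1 →
      ∃ Λbar : Set (EuclideanSpace ℝ (Fin n)),
        Λbar ⊆ closedBall 0 r ∧
        (sparseSphere n m - sparseSphere n m) ∩ closedBall 0 r ⊆ (2 : ℝ) • convexHull ℝ Λbar ∧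
        Λbar.Finite ∧ (Λbar.ncard : ℝ) ≤ Real.exp (c * m * Real.log (c * n / (m * ε))) := by
  refine ⟨4, by norm_num, fun n m ε r hε hε2 hm hmn h2mn hr _ => ?_⟩
  set b := (EuclideanSpace.basisFun (Fin n) ℝ).toBasis
  choose N hNr hNfin hNcard hcov using fun S : Finset (Fin n) =>
    (Submodule.span ℝ (b '' S)).exists_finite_closedBall_inter_subset_two_smul_convexHull hr
  set 𝒮 := Finset.powersetCard (2 * m) (Finset.univ : Finset (Fin n))
  refine ⟨⋃ S ∈ 𝒮, N S, iUnion₂_subset fun S _ => hNr S, ?_,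
    𝒮.finite_toSet.biUnion fun S _ => hNfin S, ?_⟩
  · rintro x ⟨hx, hxr⟩
    obtain ⟨S, hS, hxS⟩ := exists_card_eq_mem_span_of_mem_sparseSphere_sub h2mn hx
    have hS𝒮 : S ∈ 𝒮 := Finset.mem_powersetCard.mpr ⟨Finset.subset_univ S, hS⟩
    exact smul_set_mono (convexHull_mono (subset_biUnion_of_mem (u := N) hS𝒮))
      (hcov S ⟨hxr, hxS⟩)
  · have hcard : ∀ S ∈ 𝒮, (N S).ncard ≤ 5 ^ (2 * m) := fun S hS => by
      have hdim := (finrank_span_image_finset_le_card (R := ℝ) b S).trans_eq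
        (Finset.mem_powersetCard.mp hS).2
      exact (hNcard S).trans (Nat.pow_le_pow_right (by norm_num) hdim)
    have hΛ : (⋃ S ∈ 𝒮, N S).ncard ≤ n.choose (2 * m) * 5 ^ (2 * m) :=
      calc (⋃ S ∈ 𝒮, N S).ncard ≤ ∑ S ∈ 𝒮, (N S).ncard := Finset.set_ncard_biUnion_le 𝒮 N
        _ ≤ 𝒮.card • 5 ^ (2 * m) := Finset.sum_le_card_nsmul _ _ _ hcard
        _ = n.choose (2 * m) * 5 ^ (2 * m) := by simp [𝒮]
    calc ((⋃ S ∈ 𝒮, N S).ncard : ℝ) ≤ n.choose (2 * m) * 5 ^ (2 * m) := by exact_mod_cast hΛ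
      _ ≤ exp (4 * m * log (4 * n / (m * ε))) := choose_two_mul_mul_five_pow_le_exp hε hε2 hm hmn
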